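/- Let p̄ ∈ ℝ^n_{>0} be such that every good is demanded by some bidder at p̄, and let P = { p : G^b(p) ⊇ G^b(p̄) ∀b ∈ 𝓑, p_i ≥ p̄_i/2 ∀i }. Define p* by p*_i = sup_{p ∈ P} p_i. Then p* ∈ P and p* ≥ p̄ coordinate-wise; in particular p* is the unique maximizer of Σ_i p_i over P. -/
import Mathlib


open Finset

def extOne (n : ℕ) (v : Fin n → ℝ) : Fin (n + 1) → ℝ := Fin.cases 1 v

/-- The goods (including the dummy good `0`) demanded by bid `b` at prices `p`. -/
def demandedGoods (n : ℕ) (b p : Fin n → ℝ) : Set (Fin (n + 1)) :=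
  {i | ∀ j, extOne n b i * extOne n p j ≥ extOne n b j * extOne n p i}

/-- The set `P` of not-too-small prices at which every bidder demands a superset
of the goods demanded at `p̄`. -/
def polytopeP (n : ℕ) (B : Finset (Fin n → ℝ)) (pbar : Fin n → ℝ) : Set (Fin n → ℝ) :=
  {p | (∀ b ∈ B, ∀ i : Fin (n + 1),
      i ∈ demandedGoods n b pbar → i ∈ demandedGoods n b p) ∧
    ∀ i, pbar i / 2 ≤ p i}

/-- The coordinate-wise supremum of `P`. -/
noncomputable def pStar (n : ℕ) (B : Finset (Fin n → ℝ)) (pbar : Fin n → ℝ) :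
    Fin n → ℝ :=
  fun i => sSup {t : ℝ | ∃ p ∈ polytopeP n B pbar, t = p i}

lemma extOne_zero (n : ℕ) (v : Fin n → ℝ) : extOne n v 0 = 1 := rfl
lemma extOne_succ (n : ℕ) (v : Fin n → ℝ) (i : Fin n) : extOne n v i.succ = v i := by
  simp [extOne]


/-- The coordinate-wise supremum `p*` of `P` lies in `P`, dominates `p̄`, and is
the unique maximizer of `Σ_i p_i` over `P`. -/
theorem stmt8 (n : ℕ) (hn : 1 ≤ n) (B : Finset (Fin n → ℝ))
    (hbnn : ∀ b ∈ B, ∀ i, 0 ≤ b i) (hgood : ∀ i : Fin n, ∃ b ∈ B, 0 < b i)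
    (pbar : Fin n → ℝ) (hpbar : ∀ i, 0 < pbar i)
    (hdem : ∀ i : Fin n, ∃ b ∈ B, i.succ ∈ demandedGoods n b pbar) :
    pStar n B pbar ∈ polytopeP n B pbar ∧
    (∀ i, pbar i ≤ pStar n B pbar i) ∧
    ∀ q ∈ polytopeP n B pbar,
      (∑ i, q i ≤ ∑ i, pStar n B pbar i) ∧
      (∑ i, q i = ∑ i, pStar n B pbar i → q = pStar n B pbar) := by
  have hpbarP : pbar ∈ polytopeP n B pbar :=
    ⟨fun b hb i hi => hi, fun i => by linarith [hpbar i]⟩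
  have hbdd : ∀ i : Fin n, BddAbove {t : ℝ | ∃ p ∈ polytopeP n B pbar, t = p i} := by
    intro i
    obtain ⟨b, hb, hdi⟩ := hdem i
    refine ⟨b i, ?_⟩
    rintro t ⟨p, hp, rfl⟩
    have h2 : ∀ j, extOne n b i.succ * extOne n p j ≥ extOne n b j * extOne n p i.succ :=
      hp.1 b hb i.succ hdi
    have := h2 0
    simp only [extOne_zero, extOne_succ] at this
    linarith
  have hle : ∀ p ∈ polytopeP n B pbar, ∀ i, p i ≤ pStar n B pbar i := by
    intro p hp i
    exact le_csSup (hbdd i) ⟨p, hp, rfl⟩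
  have hleE : ∀ p ∈ polytopeP n B pbar, ∀ j : Fin (n+1),
      extOne n p j ≤ extOne n (pStar n B pbar) j := by
    intro p hp j
    induction j using Fin.cases with
    | zero => rw [extOne_zero, extOne_zero]
    | succ k => rw [extOne_succ, extOne_succ]; exact hle p hp k
  have happrox : ∀ ε : ℝ, 0 < ε → ∀ i : Fin (n+1),
      ∃ p ∈ polytopeP n B pbar, extOne n (pStar n B pbar) i - ε ≤ extOne n p i := by
    intro ε hε i
    induction i using Fin.cases with
    | zero =>
      exact ⟨pbar, hpbarP, by rw [extOne_zero, extOne_zero]; linarith⟩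
    | succ k =>
      have hne : ({t : ℝ | ∃ p ∈ polytopeP n B pbar, t = p k}).Nonempty :=
        ⟨pbar k, pbar, hpbarP, rfl⟩
      have hlt : pStar n B pbar k - ε < sSup {t : ℝ | ∃ p ∈ polytopeP n B pbar, t = p k} := by
        show pStar n B pbar k - ε < pStar n B pbar k
        linarith
      obtain ⟨t, ⟨p, hp, rfl⟩, ht⟩ := exists_lt_of_lt_csSup hne hlt
      exact ⟨p, hp, by simp only [extOne_succ]; linarith⟩
  have hbnnE : ∀ b ∈ B, ∀ j : Fin (n+1), 0 ≤ extOne n b j := by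
    intro b hb j
    induction j using Fin.cases with
    | zero => rw [extOne_zero]; norm_num
    | succ k => rw [extOne_succ]; exact hbnn b hb k
  have hmem : pStar n B pbar ∈ polytopeP n B pbar := by
    constructor
    · intro b hb i hi j
      set Bi := extOne n b i
      set Bj := extOne n b j
      set Si := extOne n (pStar n B pbar) i
      set Sj := extOne n (pStar n B pbar) j
      have hBi : 0 ≤ Bi := hbnnE b hb i
      have hBj : 0 ≤ Bj := hbnnE b hb j
      show Bi * Sj ≥ Bj * Si
      refine le_of_forall_pos_le_add ?_
      intro ε hε
      have hδ : 0 < ε / (Bj + 1) := by positivity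
      obtain ⟨p, hp, hpi⟩ := happrox (ε / (Bj + 1)) hδ i
      have hc : Bi * extOne n p j ≥ Bj * extOne n p i := hp.1 b hb i hi j
      have h1 : Bi * extOne n p j ≤ Bi * Sj :=
        mul_le_mul_of_nonneg_left (hleE p hp j) hBi
      have h2 : Bj * Si ≤ Bj * (extOne n p i + ε / (Bj + 1)) := by
        apply mul_le_mul_of_nonneg_left _ hBj
        linarith
      have h3 : Bj * (ε / (Bj + 1)) ≤ ε := by
        rw [mul_comm, div_mul_eq_mul_div, div_le_iff₀ (by linarith)]
        nlinarith
      nlinarith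
    · intro i
      have := hle pbar hpbarP i
      linarith [hpbar i]
  refine ⟨hmem, fun i => hle pbar hpbarP i, fun q hq => ?_⟩
  have hql : ∀ i ∈ Finset.univ, q i ≤ pStar n B pbar i := fun i _ => hle q hq i
  refine ⟨Finset.sum_le_sum hql, fun heq => ?_⟩
  funext i
  exact (Finset.sum_eq_sum_iff_of_le hql).mp heq i (Finset.mem_univ i)
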